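/- If σ is a perfect matching on {1,…,n} with at most k−1 pairwise intersections, then there exists a collection of k binary search trees T₁,…,Tₖ on {1,…,n} such that every matched pair of σ appears as an edge in some Tᵢ. -/

import Mathlib

/-- Binary trees with natural-number keys. -/
inductive BTree where
  | leaf : BTree
  | node : BTree → ℕ → BTree → BTree

/-- In-order traversal of a binary tree. -/
def BTree.inorder : BTree → List ℕ
  | .leaf => []
  | .node l v r => l.inorder ++ v :: r.inorder

/-- The key at the root, if any. -/
def BTree.root? : BTree → Option ℕ
  | .leaf => none
  | .node _ v _ => some v

/-- The (parent, child) edges of a binary tree. -/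
def BTree.edges : BTree → List (ℕ × ℕ)
  | .leaf => []
  | .node l v r =>
      (l.root?.toList.map fun w => (v, w)) ++
      (r.root?.toList.map fun w => (v, w)) ++ l.edges ++ r.edges

/-- `u` and `v` are joined by a (parent-child) edge of `t`. -/
def BTree.IsEdge (t : BTree) (u v : ℕ) : Prop :=
  (u, v) ∈ t.edges ∨ (v, u) ∈ t.edges

/-- `t` is a binary search tree on `{1,…,n}`: its in-order traversal is
`1, 2, …, n`. -/
def IsBST (n : ℕ) (t : BTree) : Prop := t.inorder = List.range' 1 n

/-- Requests `(i,j)` and `(k,l)` intersect: exactly one of `k, l` lies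
strictly between `i` and `j`. -/
def Intersects (i j k l : ℕ) : Prop :=
  (min i j < k ∧ k < max i j ∧ ¬(min i j ≤ l ∧ l ≤ max i j)) ∨
  (¬(min i j ≤ k ∧ k ≤ max i j) ∧ min i j < l ∧ l < max i j)

/-!
Colour the requests so that intersecting requests get different colours. Counting ordered
intersecting pairs, each request intersects at most `k - 1` others, so greedy colouring with
`k` colours succeeds. Each colour class is a non-crossing matching, and a non-crossing matching
embeds in a single BST on `1, …, n`: a right spine in which the partner `j` of a left endpoint
`i` is the right child of `i`, carrying the keys strictly between `i` and `j` (again closed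
under the matching) as its left subtree.
-/

open Finset

theorem Intersects.symm {i j k l : ℕ} (h : Intersects i j k l) : Intersects k l i j := by
  unfold Intersects at *; omega

def intersectionGraph : SimpleGraph (ℕ × ℕ) where
  Adj p q := p ≠ q ∧ Intersects p.1 p.2 q.1 q.2
  symm := ⟨fun _ _ h => ⟨h.1.symm, h.2.symm⟩⟩
  loopless := ⟨fun _ h => h.1 rfl⟩

namespace SimpleGraph

variable {α : Type*} [DecidableEq α] (G : SimpleGraph α) [DecidableRel G.Adj]

theorem two_mul_card_neighbors_le_card_adj_pairs (M : Finset α) {p : α} (hp : p ∈ M) :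
    2 * #{q ∈ M | G.Adj p q} ≤ #{pq ∈ M ×ˢ M | G.Adj pq.1 pq.2} := by
  set N := {q ∈ M | G.Adj p q}
  have hdisj : Disjoint (N.image (p, ·)) (N.image (·, p)) := by
    rw [Finset.disjoint_left]
    intro x hx₁ hx₂
    obtain ⟨q, hq, rfl⟩ := mem_image.1 hx₁
    obtain ⟨r, -, hrq⟩ := mem_image.1 hx₂
    exact G.ne_of_adj (mem_filter.1 hq).2 (congrArg Prod.snd hrq)
  calc 2 * #N = #(N.image (p, ·) ∪ N.image (·, p)) := by
        rw [card_union_of_disjoint hdisj, card_image_of_injective _ (Prod.mk_right_injective p),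
          card_image_of_injective _ (Prod.mk_left_injective p), two_mul]
    _ ≤ _ := by
      refine card_le_card fun x hx => ?_
      simp only [N, mem_union, mem_image, mem_filter] at hx
      rcases hx with ⟨q, ⟨hq, hpq⟩, rfl⟩ | ⟨q, ⟨hq, hpq⟩, rfl⟩
      · exact mem_filter.2 ⟨mem_product.2 ⟨hp, hq⟩, hpq⟩
      · exact mem_filter.2 ⟨mem_product.2 ⟨hq, hp⟩, hpq.symm⟩

theorem exists_coloring_of_card_neighbors_lt {k : ℕ} (hk : 0 < k) (M : Finset α)
    (hdeg : ∀ p ∈ M, #{q ∈ M | G.Adj p q} < k) :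
    ∃ c : α → Fin k, ∀ p ∈ M, ∀ q ∈ M, G.Adj p q → c p ≠ c q := by
  induction M using Finset.induction_on with
  | empty => exact ⟨fun _ => ⟨0, hk⟩, by simp⟩
  | insert a s ha ih =>
    have hmono : ∀ p, #{q ∈ s | G.Adj p q} ≤ #{q ∈ insert a s | G.Adj p q} :=
      fun p => card_le_card (filter_subset_filter _ (subset_insert a s))
    obtain ⟨c, hc⟩ := ih fun p hp => (hmono p).trans_lt (hdeg p (mem_insert_of_mem hp))
    obtain ⟨i, -, hi⟩ := exists_mem_notMem_of_card_lt_card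
      (s := image c {q ∈ s | G.Adj a q}) (t := univ)
      (by simpa using card_image_le.trans_lt ((hmono a).trans_lt (hdeg a (mem_insert_self a s))))
    have hfresh : ∀ q ∈ s, G.Adj a q → c q ≠ i :=
      fun q hq haq hqi => hi (mem_image.2 ⟨q, mem_filter.2 ⟨hq, haq⟩, hqi⟩)
    refine ⟨Function.update c a i, fun p hp q hq hpq => ?_⟩
    rcases mem_insert.1 hp with rfl | hps <;> rcases mem_insert.1 hq with rfl | hqs
    · exact absurd hpq G.irrefl
    · rw [Function.update_self, Function.update_of_ne (ne_of_mem_of_not_mem hqs ha)]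
      exact (hfresh q hqs hpq).symm
    · rw [Function.update_self, Function.update_of_ne (ne_of_mem_of_not_mem hps ha)]
      exact hfresh p hps hpq.symm
    · rw [Function.update_of_ne (ne_of_mem_of_not_mem hps ha),
        Function.update_of_ne (ne_of_mem_of_not_mem hqs ha)]
      exact hc p hps q hqs hpq

end SimpleGraph

namespace BTree

theorem mem_edges_node_of_mem_left {l r : BTree} {v : ℕ} {e : ℕ × ℕ} (h : e ∈ l.edges) :
    e ∈ (node l v r).edges := by
  simp only [edges, List.mem_append]; tauto

theorem mem_edges_node_of_mem_right {l r : BTree} {v : ℕ} {e : ℕ × ℕ} (h : e ∈ r.edges) :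
    e ∈ (node l v r).edges := by
  simp only [edges, List.mem_append]; tauto

noncomputable def ofArcs (S : Finset (ℕ × ℕ)) (lo : ℕ) : ℕ → BTree
  | 0 => leaf
  | len + 1 =>
    open Classical in
    if h : ∃ j, lo < j ∧ j ≤ lo + len ∧ (lo, j) ∈ S then
      node leaf lo (node (ofArcs S (lo + 1) (h.choose - (lo + 1))) h.choose
        (ofArcs S (h.choose + 1) (lo + len - h.choose)))
    else
      node leaf lo (ofArcs S (lo + 1) len)
termination_by len => len
decreasing_by all_goals first | (have := h.choose_spec; omega) | omega

theorem inorder_ofArcs (S : Finset (ℕ × ℕ)) (lo len : ℕ) :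
    (ofArcs S lo len).inorder = List.range' lo len := by
  induction len using Nat.strong_induction_on generalizing lo with
  | _ len ih =>
    rcases len with _ | len
    · simp [ofArcs, inorder]
    rw [ofArcs]
    split_ifs with h
    · obtain ⟨hlo, hhi, -⟩ := h.choose_spec
      simp only [inorder, List.nil_append]
      rw [ih _ (by omega), ih _ (by omega), List.range'_succ (s := lo), ← List.range'_succ]
      exact congrArg _ (List.range'_eq_append_iff.2 ⟨_, by omega, rfl, by congr 1 <;> omega⟩).symm
    · simp only [inorder, List.nil_append, ih len (by omega), List.range'_succ]

variable {S : Finset (ℕ × ℕ)}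

theorem ofArcs_succ_of_mem
    (hdisj : ∀ p ∈ S, ∀ q ∈ S, ∀ x, (x = p.1 ∨ x = p.2) → (x = q.1 ∨ x = q.2) → p = q)
    {lo len j : ℕ} (hj : (lo, j) ∈ S) (hlo : lo < j) (hhi : j ≤ lo + len) :
    ofArcs S lo (len + 1) = node leaf lo
      (node (ofArcs S (lo + 1) (j - (lo + 1))) j (ofArcs S (j + 1) (lo + len - j))) := by
  have h : ∃ j, lo < j ∧ j ≤ lo + len ∧ (lo, j) ∈ S := ⟨j, hlo, hhi, hj⟩
  have hchoose : h.choose = j :=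
    congrArg Prod.snd (hdisj _ h.choose_spec.2.2 _ hj lo (Or.inl rfl) (Or.inl rfl))
  rw [ofArcs, dif_pos h, hchoose]

theorem ofArcs_succ_of_forall_notMem {lo len : ℕ}
    (h : ∀ j, lo < j → j ≤ lo + len → (lo, j) ∉ S) :
    ofArcs S lo (len + 1) = node leaf lo (ofArcs S (lo + 1) len) := by
  rw [ofArcs, dif_neg]
  rintro ⟨j, hlo, hhi, hj⟩
  exact h j hlo hhi hj

theorem mem_edges_ofArcs (hord : ∀ p ∈ S, p.1 < p.2)
    (hdisj : ∀ p ∈ S, ∀ q ∈ S, ∀ x, (x = p.1 ∨ x = p.2) → (x = q.1 ∨ x = q.2) → p = q)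
    (hcross : ∀ p ∈ S, ∀ q ∈ S, p ≠ q → ¬Intersects p.1 p.2 q.1 q.2)
    {p : ℕ × ℕ} (hp : p ∈ S) {lo len : ℕ} (hlo : lo ≤ p.1) (hhi : p.2 < lo + len) :
    p ∈ (ofArcs S lo len).edges := by
  induction len using Nat.strong_induction_on generalizing lo with
  | _ len ih =>
    have hp₁₂ := hord p hp
    rcases len with _ | len
    · omega
    by_cases hpartner : ∃ j, lo < j ∧ j ≤ lo + len ∧ (lo, j) ∈ S
    · obtain ⟨j, hloj, hjhi, hj⟩ := hpartner
      rw [ofArcs_succ_of_mem hdisj hj hloj hjhi]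
      by_cases hpj : p = (lo, j)
      · simp [hpj, edges, root?]
      have hfree : ∀ x, (x = p.1 ∨ x = p.2) → x ≠ lo ∧ x ≠ j := fun x hx =>
        ⟨fun h => hpj (hdisj _ hp _ hj x hx (Or.inl h)),
          fun h => hpj (hdisj _ hp _ hj x hx (Or.inr h))⟩
      have hfree₁ := hfree _ (Or.inl rfl)
      have hfree₂ := hfree _ (Or.inr rfl)
      have hnest := hcross p hp _ hj hpj
      unfold Intersects at hnest
      -- `p` does not cross `(lo, j)`, so it lies either under `j` or to its right.
      rcases (by omega : p.2 < j ∨ j < p.1) with hin | hout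
      · exact mem_edges_node_of_mem_right <| mem_edges_node_of_mem_left <|
          ih _ (by omega) (by omega) (by omega)
      · exact mem_edges_node_of_mem_right <| mem_edges_node_of_mem_right <|
          ih _ (by omega) (by omega) (by omega)
    · push Not at hpartner
      have hp₁ : p.1 ≠ lo := fun h => hpartner p.2 (by omega) (by omega) (h ▸ hp)
      rw [ofArcs_succ_of_forall_notMem hpartner]
      exact mem_edges_node_of_mem_right (ih len (by omega) (by omega) (by omega))

end BTree

open scoped Classical in
theorem stmt_9_general (n k : ℕ) (hk : 1 ≤ k) (M : Finset (ℕ × ℕ))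
    (horder : ∀ p ∈ M, p.1 < p.2)
    (hrange : ∀ p ∈ M, 1 ≤ p.1 ∧ p.2 ≤ n)
    (hcover : ∀ x, 1 ≤ x → x ≤ n → ∃! p, p ∈ M ∧ (x = p.1 ∨ x = p.2))
    (hX : ((M ×ˢ M).filter fun pq =>
        pq.1 ≠ pq.2 ∧ Intersects pq.1.1 pq.1.2 pq.2.1 pq.2.2).card
          ≤ 2 * (k - 1)) :
    ∃ T : Fin k → BTree, (∀ i, IsBST n (T i)) ∧
      ∀ p ∈ M, ∃ i, (T i).IsEdge p.1 p.2 := by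
  have hdeg : ∀ p ∈ M, #{q ∈ M | intersectionGraph.Adj p q} < k := fun p hp => by
    have := intersectionGraph.two_mul_card_neighbors_le_card_adj_pairs M hp
    have : #{pq ∈ M ×ˢ M | intersectionGraph.Adj pq.1 pq.2} ≤ 2 * (k - 1) := by
      convert hX; rfl
    omega
  obtain ⟨c, hc⟩ := intersectionGraph.exists_coloring_of_card_neighbors_lt hk M hdeg
  have hdisj : ∀ p ∈ M, ∀ q ∈ M, ∀ x, (x = p.1 ∨ x = p.2) → (x = q.1 ∨ x = q.2) → p = q := by
    intro p hp q hq x hxp hxq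
    have := horder p hp
    have := hrange p hp
    exact (hcover x (by omega) (by omega)).unique ⟨hp, hxp⟩ ⟨hq, hxq⟩
  refine ⟨fun i => BTree.ofArcs {p ∈ M | c p = i} 1 n, fun i => BTree.inorder_ofArcs _ 1 n,
    fun p hp => ⟨c p, Or.inl ?_⟩⟩
  have hclass : ∀ {q}, q ∈ {q ∈ M | c q = c p} ↔ q ∈ M ∧ c q = c p := mem_filter
  refine BTree.mem_edges_ofArcs (fun q hq => horder q (hclass.1 hq).1)
    (fun q hq r hr => hdisj q (hclass.1 hq).1 r (hclass.1 hr).1)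
    (fun q hq r hr hqr hcross => ?_) (hclass.2 ⟨hp, rfl⟩) (hrange p hp).1
    (by have := hrange p hp; omega)
  exact hc q (hclass.1 hq).1 r (hclass.1 hr).1 ⟨hqr, hcross⟩
    ((hclass.1 hq).2.trans (hclass.1 hr).2.symm)

open scoped Classical in
/-- If `M` is a perfect matching on `{1,…,n}` with at most `k−1` pairwise
intersections (each unordered intersecting pair of requests is counted twice
in the ordered count below), then there exist `k` BSTs on `{1,…,n}` such that
every matched pair appears as an edge in some tree. -/
theorem stmt_9 (n k : ℕ) (hk : 1 ≤ k) (hn : 2 ∣ n) (M : Finset (ℕ × ℕ))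
    (horder : ∀ p ∈ M, p.1 < p.2)
    (hrange : ∀ p ∈ M, 1 ≤ p.1 ∧ p.2 ≤ n)
    (hcover : ∀ x, 1 ≤ x → x ≤ n → ∃! p, p ∈ M ∧ (x = p.1 ∨ x = p.2))
    (hX : ((M ×ˢ M).filter fun pq =>
        pq.1 ≠ pq.2 ∧ Intersects pq.1.1 pq.1.2 pq.2.1 pq.2.2).card
          ≤ 2 * (k - 1)) :
    ∃ T : Fin k → BTree, (∀ i, IsBST n (T i)) ∧
      ∀ p ∈ M, ∃ i, (T i).IsEdge p.1 p.2 :=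
  stmt_9_general n k hk M horder hrange hcover hX
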